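/- Let G be a graph on vertices {x_1,...,x_n, y_1,...,y_n} (all non-isolated) such that X = {x_1,...,x_n} is a minimal vertex cover, Y = {y_1,...,y_n} is a maximal independent set, x_i y_i ∈ E(G) for all i, and the minimum vertex cover size is n. If G is unmixed, then: (i) for distinct i, j, k and z_i ∈ {x_i, y_i}, if z_i x_j ∈ E(G) and y_j x_k ∈ E(G), then z_i x_k ∈ E(G); and (ii) if x_i y_j ∈ E(G) then x_i x_j ∉ E(G). -/

import Mathlib

open SimpleGraph

/-- `C` is a vertex cover of `G`. -/
def IsVC {V : Type*} (G : SimpleGraph V) (C : Set V) : Prop :=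
  ∀ ⦃u v : V⦄, G.Adj u v → u ∈ C ∨ v ∈ C

/-- `C` is a minimal (inclusion-wise) vertex cover of `G`. -/
def IsMinVC {V : Type*} (G : SimpleGraph V) (C : Set V) : Prop :=
  IsVC G C ∧ ∀ C' : Set V, C' ⊆ C → IsVC G C' → C' = C

/-- `A` is an independent set of `G`. -/
def IsIndep {V : Type*} (G : SimpleGraph V) (A : Set V) : Prop :=
  ∀ ⦃u v : V⦄, u ∈ A → v ∈ A → ¬ G.Adj u v

/-- `A` is a maximal independent set of `G`. -/
def IsMaxIndep {V : Type*} (G : SimpleGraph V) (A : Set V) : Prop :=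
  IsIndep G A ∧ ∀ A' : Set V, A ⊆ A' → IsIndep G A' → A' = A

/-- `G` is unmixed: all minimal vertex covers have the same cardinality. -/
def Unmixed {V : Type*} (G : SimpleGraph V) : Prop :=
  ∀ C₁ C₂ : Set V, IsMinVC G C₁ → IsMinVC G C₂ → C₁.ncard = C₂.ncard

/-- Vertex type with the two classes `X = {x_1,…,x_n}` (left) and `Y = {y_1,…,y_n}` (right). -/
abbrev VT (n : ℕ) := Fin n ⊕ Fin n

/-- The vertex `x_i`. -/
def xv {n : ℕ} (i : Fin n) : VT n := Sum.inl i

/-- The vertex `y_i`. -/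
def yv {n : ℕ} (i : Fin n) : VT n := Sum.inr i

/-- The 4-cycle `C_{ij}` (edges `x_iy_i, y_ix_j, x_jy_j, y_jx_i`) is contained in `G`. -/
def HasC2 {n : ℕ} (G : SimpleGraph (VT n)) (i j : Fin n) : Prop :=
  G.Adj (xv i) (yv i) ∧ G.Adj (yv i) (xv j) ∧ G.Adj (xv j) (yv j) ∧ G.Adj (yv j) (xv i)

/-- The `2r`-cycle `C_{i_1…i_r}` given by `f : Fin r → Fin n` is contained in `G`:
edges `x_{f s} y_{f s}` and `y_{f s} x_{f (s+1)}` (cyclically). -/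
def IsCycleIn {n r : ℕ} (G : SimpleGraph (VT n)) (f : Fin r → Fin n) : Prop :=
  ∀ s : Fin r, G.Adj (xv (f s)) (yv (f s)) ∧ G.Adj (yv (f s)) (xv (f (finRotate r s)))

/-! Extend an independent set `I` to a maximal independent set `A`. Its complement is a minimal
vertex cover, so by unmixedness it has exactly `n` elements, like `X`. It meets each of the `n`
edges `x_k y_k`, hence contains exactly one endpoint of each, and `A` contains the other one. So
`I` extends independently by `x_k` or by `y_k`, for every `k`. Applied to `I = {z, x_k}` this
gives (i), since `z x_j` and `y_j x_k` are edges; applied to `I = {x_i}` it gives (ii). -/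

section IndependentSets

variable {V : Type*} (G : SimpleGraph V)

lemma isIndep_pair {u v : V} (h : ¬ G.Adj u v) : IsIndep G {u, v} := by
  rintro a b (rfl | rfl) (rfl | rfl) hab
  exacts [G.irrefl hab, h hab, h hab.symm, G.irrefl hab]

lemma isIndep_singleton (u : V) : IsIndep G {u} := by
  simpa using isIndep_pair G (G.irrefl (v := u))

lemma IsIndep.exists_isMaxIndep_superset [Finite V] {I : Set V} (hI : IsIndep G I) :
    ∃ A, I ⊆ A ∧ IsMaxIndep G A := by
  obtain ⟨A, hIA, hA⟩ := Set.Finite.exists_le_maximal (s := {A | IsIndep G A}) (Set.toFinite _) hI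
  exact ⟨A, hIA, hA.prop, fun A' hAA' hA' => hA.eq_of_ge hA' hAA'⟩

lemma IsMaxIndep.compl_isMinVC {A : Set V} (hA : IsMaxIndep G A) : IsMinVC G Aᶜ := by
  refine ⟨fun u v huv => ?_, fun C hCA hC => ?_⟩
  · by_contra! h
    simp only [Set.mem_compl_iff, not_not] at h
    exact hA.1 h.1 h.2 huv
  · have hCind : IsIndep G Cᶜ := fun u v hu hv huv => (hC huv).elim hu hv
    rw [← hA.2 Cᶜ (Set.subset_compl_comm.mp hCA) hCind, compl_compl]

end IndependentSets

lemma Sum.card_lt_ncard_of_forall_mem_or_mem {ι : Type*} [Finite ι] {C : Set (ι ⊕ ι)}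
    (hC : ∀ i, Sum.inl i ∈ C ∨ Sum.inr i ∈ C) {k : ι} (hl : Sum.inl k ∈ C) (hr : Sum.inr k ∈ C) :
    Nat.card ι < C.ncard := by
  set π : ι ⊕ ι → ι := Sum.elim id id
  have himage : π '' C = Set.univ := Set.eq_univ_of_forall fun i =>
    (hC i).elim (fun h => ⟨_, h, rfl⟩) (fun h => ⟨_, h, rfl⟩)
  have hle : Nat.card ι ≤ C.ncard := by
    simpa [himage] using Set.ncard_image_le (f := π) (s := C)
  refine hle.lt_of_ne fun heq => ?_
  have hinj : Set.InjOn π C := Set.injOn_of_ncard_image_eq (by simp [himage, heq])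
  exact Sum.inl_ne_inr (hinj hl hr rfl)

lemma ncard_range_xv (n : ℕ) : (Set.range (xv : Fin n → VT n)).ncard = n := by
  have hxv : Function.Injective (xv : Fin n → VT n) := Sum.inl_injective
  rw [Set.ncard_range_of_injective hxv, Nat.card_eq_fintype_card, Fintype.card_fin]

section Unmixed

variable {n : ℕ} {G : SimpleGraph (VT n)}

lemma Unmixed.mem_or_mem_of_isMaxIndep (hu : Unmixed G)
    (hX : IsMinVC G (Set.range (xv : Fin n → VT n))) (hm : ∀ i : Fin n, G.Adj (xv i) (yv i))
    {A : Set (VT n)} (hA : IsMaxIndep G A) (k : Fin n) : xv k ∈ A ∨ yv k ∈ A := by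
  have hC := hA.compl_isMinVC
  have hcard : Aᶜ.ncard = n := by rw [hu _ _ hC hX, ncard_range_xv]
  by_contra! hk
  have := Sum.card_lt_ncard_of_forall_mem_or_mem (fun i => hC.1 (hm i)) hk.1 hk.2
  simp [hcard] at this

lemma Unmixed.exists_isIndep_superset_mem_or_mem (hu : Unmixed G)
    (hX : IsMinVC G (Set.range (xv : Fin n → VT n))) (hm : ∀ i : Fin n, G.Adj (xv i) (yv i))
    {I : Set (VT n)} (hI : IsIndep G I) (k : Fin n) :
    ∃ A, I ⊆ A ∧ IsIndep G A ∧ (xv k ∈ A ∨ yv k ∈ A) := by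
  obtain ⟨A, hIA, hA⟩ := hI.exists_isMaxIndep_superset
  exact ⟨A, hIA, hA.1, hu.mem_or_mem_of_isMaxIndep hX hm hA k⟩

end Unmixed

theorem unmixed_implies_conditions_general {n : ℕ} (G : SimpleGraph (VT n))
    (hX : IsMinVC G (Set.range (xv : Fin n → VT n)))
    (hm : ∀ i : Fin n, G.Adj (xv i) (yv i))
    (hu : Unmixed G) :
    (∀ i j k : Fin n, i ≠ j → j ≠ k → i ≠ k →
        ∀ z ∈ ({xv i, yv i} : Set (VT n)),
          G.Adj z (xv j) → G.Adj (yv j) (xv k) → G.Adj z (xv k)) ∧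
      (∀ i j : Fin n, G.Adj (xv i) (yv j) → ¬ G.Adj (xv i) (xv j)) := by
  constructor
  · intro i j k _ _ _ z _ hzj hjk
    by_contra hzk
    obtain ⟨A, hIA, hA, hxj | hyj⟩ :=
      hu.exists_isIndep_superset_mem_or_mem hX hm (isIndep_pair G hzk) j
    · exact hA (hIA (by simp)) hxj hzj
    · exact hA hyj (hIA (by simp)) hjk
  · intro i j hxy hxx
    obtain ⟨A, hIA, hA, hxj | hyj⟩ :=
      hu.exists_isIndep_superset_mem_or_mem hX hm (isIndep_singleton G (xv i)) j
    · exact hA (hIA rfl) hxj hxx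
    · exact hA (hIA rfl) hyj hxy

/-- If `G` (in the setup (*)) is unmixed, then conditions (i) and (ii) hold. -/
theorem unmixed_implies_conditions {n : ℕ} (G : SimpleGraph (VT n))
    (hni : ∀ v : VT n, ∃ u : VT n, G.Adj u v)
    (hX : IsMinVC G (Set.range (xv : Fin n → VT n)))
    (hY : IsMaxIndep G (Set.range (yv : Fin n → VT n)))
    (hm : ∀ i : Fin n, G.Adj (xv i) (yv i))
    (hht : ∀ C : Set (VT n), IsVC G C → n ≤ C.ncard)
    (hu : Unmixed G) :
    (∀ i j k : Fin n, i ≠ j → j ≠ k → i ≠ k →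
        ∀ z ∈ ({xv i, yv i} : Set (VT n)),
          G.Adj z (xv j) → G.Adj (yv j) (xv k) → G.Adj z (xv k)) ∧
      (∀ i j : Fin n, G.Adj (xv i) (yv j) → ¬ G.Adj (xv i) (xv j)) :=
  unmixed_implies_conditions_general G hX hm hu
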